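/- arXiv:1702.05302 — 2 statements merged into one kernel-verified Lean document; each statement's English description precedes it below -/
import Mathlib

section
/- For the Rankine vortex in the plane, let W(t,x) = (K_{μt} ⋆ 1_D)(x) − 1_D(x), where K_s(x) = (1/(4πs)) e^{−|x|²/(4s)} is the 2D heat kernel and D is the unit disc. Then there exists a constant C₁ > 0 (independent of μ and t) such that for all μ, t > 0 with μt ≤ 1 and all p ∈ [2,∞), the L^p(ℝ²) norm of W(t,·) is at least C₁ (μt)^{1/(2p)}. -/
open MeasureTheory Real

noncomputable section

abbrev Plane := EuclideanSpace ℝ (Fin 2)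

/-- The 2D heat kernel at time `s`. -/
def heatKernel (s : ℝ) (x : Plane) : ℝ := (1 / (4 * π * s)) * Real.exp (-‖x‖ ^ 2 / (4 * s))

/-- Indicator function of the closed unit disc `D ⊆ ℝ²`. -/
def discInd (x : Plane) : ℝ := (Metric.closedBall (0 : Plane) 1).indicator 1 x

/-- `W(t,x) = (K_{μt} ⋆ 1_D)(x) − 1_D(x)`. -/
def Wfun (μ t : ℝ) (x : Plane) : ℝ :=
  (∫ y : Plane, heatKernel (μ * t) (x - y) * discInd y) - discInd x

/-!
Put `s = μt`. In the annulus `1 < |x| ≤ 1 + √s`, just outside the disc, `W(t, x)` is the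
heat convolution alone, and it is bounded below by an absolute constant: the disc contains a
ball of radius `√s` within distance `3√s` of `x`, on which `K_s(x - ·) ≥ e^{-9/4} / (4πs)`,
and that ball has area `πs`. The annulus has area `π(2√s + s) ≥ √s`, so
`‖W(t,·)‖_p ≥ (e^{-9/4}/4) · s^{1/(2p)}`.
-/

open Metric EuclideanSpace

lemma ofReal_mul_measure_rpow_le_eLpNorm {α F : Type*} [MeasurableSpace α]
    [NormedAddCommGroup F] {μ : Measure α} {f : α → F} {s : Set α} {c : ℝ} {p : ENNReal}
    (hs : MeasurableSet s) (hp0 : p ≠ 0) (hp : p ≠ ⊤) (hc : 0 ≤ c)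
    (hf : ∀ x ∈ s, c ≤ ‖f x‖) :
    ENNReal.ofReal c * μ s ^ (1 / p.toReal) ≤ eLpNorm f p μ := by
  rw [← Real.enorm_of_nonneg hc, ← eLpNorm_indicator_const hs hp0 hp]
  refine eLpNorm_mono fun x => ?_
  by_cases hx : x ∈ s
  · simpa [hx, abs_of_nonneg hc] using hf x hx
  · simp [hx]

lemma volume_closedBall_diff_closedBall_one_ge {r : ℝ} (hr : 0 ≤ r) :
    ENNReal.ofReal r ≤ volume (closedBall (0 : Plane) (1 + r) \ closedBall 0 1) := by
  rw [measure_sdiff (closedBall_subset_closedBall (by linarith))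
      measurableSet_closedBall.nullMeasurableSet measure_closedBall_lt_top.ne,
    volume_closedBall_fin_two, volume_closedBall_fin_two,
    ← ENNReal.ofReal_pow (by linarith), ← ENNReal.ofReal_pow zero_le_one,
    ← ENNReal.ofReal_mul (by positivity),
    ← ENNReal.ofReal_mul (by positivity), ← ENNReal.ofReal_sub _ (by positivity)]
  refine ENNReal.ofReal_le_ofReal ?_
  nlinarith [pi_gt_three, mul_nonneg pi_pos.le (sq_nonneg r)]

lemma exists_closedBall_subset_closedBall_one_dist_le {E : Type*} [NormedAddCommGroup E]
    [NormedSpace ℝ E] {r : ℝ} (hr : r ≤ 1) {x : E} (hx₁ : 1 - r ≤ ‖x‖)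
    (hx₂ : ‖x‖ ≤ 1 + r) :
    ∃ z : E, closedBall z r ⊆ closedBall 0 1 ∧ dist x z ≤ 2 * r := by
  rcases eq_or_ne x 0 with rfl | hx0
  · refine ⟨0, closedBall_subset_closedBall ?_, ?_⟩ <;>
      simp only [norm_zero, dist_self] at hx₁ ⊢ <;> linarith
  have hxpos : 0 < ‖x‖ := norm_pos_iff.mpr hx0
  refine ⟨((1 - r) / ‖x‖) • x, closedBall_subset_closedBall' ?_, ?_⟩
  · rw [dist_zero_right, norm_smul, norm_div, norm_norm, div_mul_cancel₀ _ hxpos.ne',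
      Real.norm_eq_abs, abs_of_nonneg (by linarith)]
    linarith
  · have hxz : x - ((1 - r) / ‖x‖) • x = (1 - (1 - r) / ‖x‖) • x := by
      rw [sub_smul, one_smul]
    have hcoef : 0 ≤ 1 - (1 - r) / ‖x‖ := by
      rw [sub_nonneg, div_le_one hxpos]; linarith
    rw [dist_eq_norm, hxz, norm_smul, Real.norm_eq_abs, abs_of_nonneg hcoef, sub_mul,
      div_mul_cancel₀ _ hxpos.ne']
    linarith

lemma continuous_heatKernel (s : ℝ) : Continuous (heatKernel s) := by
  unfold heatKernel
  fun_prop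

lemma heatKernel_nonneg {s : ℝ} (hs : 0 ≤ s) (x : Plane) : 0 ≤ heatKernel s x := by
  unfold heatKernel
  positivity

lemma exp_neg_div_le_heatKernel {s c : ℝ} (hs : 0 < s) {x : Plane}
    (hx : ‖x‖ ^ 2 ≤ 4 * s * c) :
    rexp (-c) / (4 * π * s) ≤ heatKernel s x := by
  rw [heatKernel, one_div_mul_eq_div]
  gcongr
  rw [neg_div, neg_le_neg_iff, div_le_iff₀ (by positivity)]
  linarith

lemma integral_heatKernel_mul_discInd (s : ℝ) (x : Plane) :
    ∫ y, heatKernel s (x - y) * discInd y = ∫ y in closedBall 0 1, heatKernel s (x - y) := by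
  rw [← integral_indicator measurableSet_closedBall]
  congr 1 with y
  by_cases hy : y ∈ closedBall (0 : Plane) 1 <;> simp [discInd, hy]

lemma integral_heatKernel_mul_discInd_ge {s : ℝ} (hs₀ : 0 < s) (hs₁ : s ≤ 1) {x : Plane}
    (hx₁ : 1 - √s ≤ ‖x‖) (hx₂ : ‖x‖ ≤ 1 + √s) :
    rexp (-(9 / 4)) / 4 ≤ ∫ y, heatKernel s (x - y) * discInd y := by
  obtain ⟨z, hzD, hxz⟩ := exists_closedBall_subset_closedBall_one_dist_le
    (Real.sqrt_le_one.mpr hs₁) hx₁ hx₂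
  have hK : ∀ y ∈ closedBall z √s,
      rexp (-(9 / 4)) / (4 * π * s) ≤ heatKernel s (x - y) := by
    intro y hy
    have hxy : ‖x - y‖ ≤ 3 * √s := by
      rw [← dist_eq_norm]
      linarith [dist_triangle x z y, (mem_closedBall'.mp hy : dist z y ≤ √s)]
    refine exp_neg_div_le_heatKernel hs₀ ?_
    nlinarith [norm_nonneg (x - y), Real.sq_sqrt hs₀.le]
  have hint : IntegrableOn (fun y => heatKernel s (x - y)) (closedBall (0 : Plane) 1) :=
    ((continuous_heatKernel s).comp (continuous_const.sub continuous_id))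
      |>.continuousOn.integrableOn_compact (isCompact_closedBall _ _)
  have hvol : volume.real (closedBall z √s) = π * s := by
    rw [measureReal_def, volume_closedBall_fin_two,
      ← ENNReal.ofReal_pow (sqrt_nonneg _),
      ← ENNReal.ofReal_mul (by positivity), ENNReal.toReal_ofReal (by positivity),
      Real.sq_sqrt hs₀.le, mul_comm]
  calc rexp (-(9 / 4)) / 4
      = rexp (-(9 / 4)) / (4 * π * s) * volume.real (closedBall z √s) := by
        rw [hvol]; field_simp
    _ ≤ ∫ y in closedBall z √s, heatKernel s (x - y) :=
        setIntegral_ge_of_const_le_real measurableSet_closedBall measure_closedBall_lt_top.ne hK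
          (hint.mono_set hzD)
    _ ≤ ∫ y in closedBall 0 1, heatKernel s (x - y) :=
        setIntegral_mono_set hint
          (.of_forall fun y => heatKernel_nonneg hs₀.le _) (.of_forall hzD)
    _ = ∫ y, heatKernel s (x - y) * discInd y := (integral_heatKernel_mul_discInd s x).symm

lemma Wfun_ge_of_mem_annulus {μ t : ℝ} (hs₀ : 0 < μ * t) (hs₁ : μ * t ≤ 1) {x : Plane}
    (hx : x ∈ closedBall 0 (1 + √(μ * t)) \ closedBall 0 1) :
    rexp (-(9 / 4)) / 4 ≤ Wfun μ t x := by
  obtain ⟨hx₂, hx₁⟩ := hx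
  rw [mem_closedBall_zero_iff] at hx₁ hx₂
  rw [Wfun, discInd, Set.indicator_of_notMem (by simpa using hx₁), sub_zero]
  exact integral_heatKernel_mul_discInd_ge hs₀ hs₁
    (by linarith [sqrt_nonneg (μ * t)]) hx₂

/-- Optimality (lower bound): there is `C₁ > 0`, independent of `μ` and `t` (but possibly
depending on `p`), such that for all `μ, t > 0` with `μt ≤ 1`,
`‖W(t,·)‖_{L^p(ℝ²)} ≥ C₁ (μt)^{1/(2p)}`. -/
theorem stmt0 (p : ℝ) (hp : 2 ≤ p) :
    ∃ C₁ > (0 : ℝ), ∀ μ t : ℝ, 0 < μ → 0 < t → μ * t ≤ 1 →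
      ENNReal.ofReal (C₁ * (μ * t) ^ (1 / (2 * p))) ≤
        eLpNorm (Wfun μ t) (ENNReal.ofReal p) volume := by
  refine ⟨rexp (-(9 / 4)) / 4, by positivity, fun μ t hμ ht hs₁ => ?_⟩
  have hs₀ : 0 < μ * t := mul_pos hμ ht
  have hp₀ : 0 < p := by linarith
  have hroot : ENNReal.ofReal ((μ * t) ^ (1 / (2 * p))) =
      ENNReal.ofReal √(μ * t) ^ (1 / (ENNReal.ofReal p).toReal) := by
    rw [ENNReal.toReal_ofReal hp₀.le, ENNReal.ofReal_rpow_of_nonneg (sqrt_nonneg _)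
      (by positivity), sqrt_eq_rpow, ← rpow_mul hs₀.le, one_div_mul_one_div]
  calc ENNReal.ofReal (rexp (-(9 / 4)) / 4 * (μ * t) ^ (1 / (2 * p)))
      = ENNReal.ofReal (rexp (-(9 / 4)) / 4) *
          ENNReal.ofReal √(μ * t) ^ (1 / (ENNReal.ofReal p).toReal) := by
        rw [ENNReal.ofReal_mul (by positivity), hroot]
    _ ≤ ENNReal.ofReal (rexp (-(9 / 4)) / 4) *
          volume (closedBall (0 : Plane) (1 + √(μ * t)) \ closedBall 0 1) ^
            (1 / (ENNReal.ofReal p).toReal) := by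
        gcongr
        exact volume_closedBall_diff_closedBall_one_ge (sqrt_nonneg _)
    _ ≤ eLpNorm (Wfun μ t) (ENNReal.ofReal p) volume :=
        ofReal_mul_measure_rpow_le_eLpNorm
          (measurableSet_closedBall.diff measurableSet_closedBall)
          (by simpa using hp₀) ENNReal.ofReal_ne_top (by positivity)
          fun x hx => (Wfun_ge_of_mem_annulus hs₀ hs₁ hx).trans (le_abs_self _)
end
end

section
/- Gaussian annulus lower bound: for all R ≥ 1 and x ∈ ℝ² with R − 1 ≤ |x| ≤ R, the integral ∫_{|z| ≥ R} e^{−|x−z|²/4} dz is bounded below by a positive absolute constant independent of R and x. -/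
/-!
The unit ball around the point `y` of norm `R + 1` on the ray through `x` lies in `{‖z‖ ≥ R}`,
and it lies within distance `3` of `x` because `R - 1 ≤ ‖x‖ ≤ R`. So the Gaussian is at least
`e^{-9/4}` on a set of area `π`, whatever `R` and `x` are.
-/

open MeasureTheory Real

noncomputable section

theorem exists_norm_eq_norm_sub_eq {E : Type*} [NormedAddCommGroup E] [NormedSpace ℝ E]
    [Nontrivial E] (x : E) {r : ℝ} (hr : 0 ≤ r) : ∃ y : E, ‖y‖ = r ∧ ‖x - y‖ = |‖x‖ - r| := by
  rcases eq_or_ne x 0 with rfl | hx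
  · obtain ⟨y, hy⟩ := exists_norm_eq E hr
    exact ⟨y, hy, by simp [hy, abs_of_nonneg hr]⟩
  · have hx' : ‖x‖ ≠ 0 := norm_ne_zero_iff.2 hx
    refine ⟨(r / ‖x‖) • x, ?_, ?_⟩
    · rw [norm_smul, norm_div, norm_norm, Real.norm_of_nonneg hr, div_mul_cancel₀ _ hx']
    · rw [show x - (r / ‖x‖) • x = (1 - r / ‖x‖) • x by rw [sub_smul, one_smul], norm_smul,
        Real.norm_eq_abs, ← abs_norm x, ← abs_mul, abs_norm, sub_mul, one_mul,
        div_mul_cancel₀ _ hx']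

theorem ball_subset_setOf_le_norm {E : Type*} [SeminormedAddCommGroup E] {y : E} {r δ : ℝ}
    (h : r + δ ≤ ‖y‖) : Metric.ball y δ ⊆ {z | r ≤ ‖z‖} := fun z hz => by
  show r ≤ ‖z‖
  linarith [norm_sub_norm_le y z, mem_ball_iff_norm'.1 hz]

theorem mul_measureReal_le_setIntegral {X : Type*} [MeasurableSpace X] {μ : Measure X}
    {f : X → ℝ} {s t : Set X} {m : ℝ} (ht : MeasurableSet t) (hμt : μ t ≠ ⊤) (hts : t ⊆ s)
    (hf : 0 ≤ f) (hfs : IntegrableOn f s μ) (hm : ∀ z ∈ t, m ≤ f z) :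
    m * μ.real t ≤ ∫ z in s, f z ∂μ :=
  (setIntegral_ge_of_const_le_real ht hμt hm (hfs.mono_set hts)).trans
    (setIntegral_mono_set hfs (ae_of_all _ hf) hts.eventuallyLE)

theorem integrable_exp_neg_mul_sq_norm {V : Type*} [NormedAddCommGroup V] [InnerProductSpace ℝ V]
    [FiniteDimensional ℝ V] [MeasurableSpace V] [BorelSpace V] {b : ℝ} (hb : 0 < b) :
    Integrable (fun v : V => rexp (-b * ‖v‖ ^ 2)) := by
  have := (GaussianFourier.integrable_cexp_neg_mul_sq_norm_add (V := V) (b := b)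
    (by simpa using hb) 0 0).norm
  refine this.congr (ae_of_all _ fun v => ?_)
  simp only [Complex.norm_exp]
  norm_cast
  rw [zero_mul, add_zero]

/-- Gaussian annulus lower bound: for all `R ≥ 1` and `x ∈ ℝ²` with `R − 1 ≤ |x| ≤ R`,
`∫_{|z| ≥ R} e^{−|x−z|²/4} dz` is bounded below by a positive absolute constant
independent of `R` and `x`. -/
theorem stmt17 :
    ∃ c > (0 : ℝ), ∀ R : ℝ, 1 ≤ R → ∀ x : Plane, R - 1 ≤ ‖x‖ → ‖x‖ ≤ R →
      c ≤ ∫ z in {z : Plane | R ≤ ‖z‖}, Real.exp (-‖x - z‖ ^ 2 / 4) := by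
  refine ⟨rexp (-9 / 4) * volume.real (Metric.ball (0 : Plane) 1),
    mul_pos (exp_pos _) (ENNReal.toReal_pos (Metric.measure_ball_pos volume 0 one_pos).ne'
      measure_ball_lt_top.ne), ?_⟩
  intro R hR x hxR₁ hxR
  obtain ⟨y, hy, hxy⟩ := exists_norm_eq_norm_sub_eq x (by linarith : 0 ≤ R + 1)
  have hxy₂ : ‖x - y‖ ≤ 2 := by rw [hxy, abs_le]; constructor <;> linarith
  have hgauss : Integrable fun z : Plane => rexp (-‖x - z‖ ^ 2 / 4) := by
    convert (integrable_exp_neg_mul_sq_norm (V := Plane) (b := 4⁻¹) (by norm_num)).comp_sub_left x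
      using 3
    ring
  rw [← Measure.addHaar_real_ball_center volume y]
  refine mul_measureReal_le_setIntegral measurableSet_ball measure_ball_lt_top.ne
    (ball_subset_setOf_le_norm hy.ge) (fun z => (exp_pos _).le) hgauss.integrableOn
    fun z hz => ?_
  have hxz : ‖x - z‖ ≤ 3 := by
    linarith [norm_sub_le_norm_sub_add_norm_sub x y z, mem_ball_iff_norm'.1 hz]
  gcongr
  nlinarith [norm_nonneg (x - z)]
end
end
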